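/- Variational derivative of H₂ with respect to u₂ (step in the proof of Theorem 3.1): let u₁, u₂, h : ℝ² → ℝ be smooth and compactly supported, and set v = 3·∂_x^{-1}(∂_y(u₁u₂)) and v₁ = 3·∂_x^{-1}(∂_y(u_{1,y}·u₂)). Then the function ε ↦ H₂(u₁, u₂ + εh) of the real variable ε is differentiable at ε = 0 with derivative ∬_{ℝ²} [v·u_{1,y} + v₁·u₁]·h dx dy. -/

import Mathlib

open MeasureTheory intervalIntegral

/-- The antiderivative operator `(∂⁻¹f)(x) = (1/2)[∫_{-∞}^x f − ∫_x^{+∞} f]`. -/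
noncomputable def pinv (f : ℝ → ℝ) (x : ℝ) : ℝ :=
  (1 / 2) * ((∫ s in Set.Iio x, f s) - ∫ s in Set.Ioi x, f s)

/-- `∂_x^{-1}` : the antiderivative operator in the first variable. -/
noncomputable def pinvX (g : ℝ × ℝ → ℝ) : ℝ × ℝ → ℝ :=
  fun p => pinv (fun s => g (s, p.2)) p.1

/-- `∂_x` : partial derivative in the first variable. -/
noncomputable def dX (g : ℝ × ℝ → ℝ) : ℝ × ℝ → ℝ :=
  fun p => deriv (fun x => g (x, p.2)) p.1

/-- `∂_y` : partial derivative in the second variable. -/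
noncomputable def dY (g : ℝ × ℝ → ℝ) : ℝ × ℝ → ℝ :=
  fun p => deriv (fun y => g (p.1, y)) p.2

/-- `H₂(u₁,u₂) = 3∬ u_{1,y}·u₂·∂_x^{-1}(u₁·u_{2,y})`. -/
noncomputable def H₂ (u₁ u₂ : ℝ × ℝ → ℝ) : ℝ :=
  3 * ∫ p : ℝ × ℝ, dY u₁ p * u₂ p * pinvX (fun q => u₁ q * dY u₂ q) p




lemma pinv_eq {f : ℝ → ℝ} (hf : Integrable f) (x : ℝ) :
    pinv f x = (∫ s in Set.Iic x, f s) - (1 / 2) * ∫ s, f s := by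
  have h1 : (∫ s in Set.Iio x, f s) = ∫ s in Set.Iic x, f s :=
    (integral_Iic_eq_integral_Iio).symm
  have h2 : (∫ s in Set.Iic x, f s) + ∫ s in Set.Ioi x, f s = ∫ s, f s :=
    intervalIntegral.integral_Iic_add_Ioi hf.integrableOn hf.integrableOn
  rw [pinv, h1]
  linarith

lemma pinv_hasDerivAt {f : ℝ → ℝ} (hf : Continuous f) (hfi : Integrable f) (x : ℝ) :
    HasDerivAt (pinv f) (f x) x := by
  have key : ∀ y : ℝ, pinv f y =
      (∫ s in (0:ℝ)..y, f s) + ((∫ s in Set.Iic (0:ℝ), f s) - (1 / 2) * ∫ s, f s) := by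
    intro y
    rw [pinv_eq hfi]
    have := intervalIntegral.integral_Iic_sub_Iic (μ := volume) (f := f) (a := (0:ℝ)) (b := y)
      hfi.integrableOn hfi.integrableOn
    linarith
  have hd : HasDerivAt (fun y => (∫ s in (0:ℝ)..y, f s)
      + ((∫ s in Set.Iic (0:ℝ), f s) - (1 / 2) * ∫ s, f s)) (f x) x := by
    have := intervalIntegral.integral_hasDerivAt_right (f := f) (a := (0:ℝ)) (b := x)
      (hfi.intervalIntegrable)
      (hf.stronglyMeasurableAtFilter _ _) hf.continuousAt
    simpa using this.add_const ((∫ s in Set.Iic (0:ℝ), f s) - (1 / 2) * ∫ s, f s)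
  exact hd.congr_of_eventuallyEq (Filter.Eventually.of_forall fun y => (key y))

lemma continuous_pinv {f : ℝ → ℝ} (hf : Continuous f) (hfi : Integrable f) :
    Continuous (pinv f) :=
  continuous_iff_continuousAt.2 fun x => (pinv_hasDerivAt hf hfi x).continuousAt


lemma pinv_top {f : ℝ → ℝ} (hfi : Integrable f) {R x : ℝ}
    (h0 : ∀ s, s ∉ Set.Icc (-R) R → f s = 0) (hx : R ≤ x) :
    pinv f x = (1 / 2) * ∫ s, f s := by
  rw [pinv_eq hfi]
  have : (∫ s in Set.Iic x, f s) = ∫ s, f s := by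
    apply setIntegral_eq_integral_of_forall_compl_eq_zero
    intro s hs
    exact h0 s (fun hmem => hs (le_trans hmem.2 hx))
  rw [this]; ring

lemma pinv_bot {f : ℝ → ℝ} (hfi : Integrable f) {R x : ℝ}
    (h0 : ∀ s, s ∉ Set.Icc (-R) R → f s = 0) (hx : x < -R) :
    pinv f x = -((1 / 2) * ∫ s, f s) := by
  rw [pinv_eq hfi]
  have : (∫ s in Set.Iic x, f s) = 0 := by
    apply setIntegral_eq_zero_of_forall_eq_zero
    intro s hs
    exact h0 s (fun hmem => by simp at hs; linarith [hmem.1])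
  rw [this]; ring

lemma pinv_add {f g : ℝ → ℝ} (hf : Integrable f) (hg : Integrable g) (x : ℝ) :
    pinv (fun s => f s + g s) x = pinv f x + pinv g x := by
  unfold pinv
  rw [integral_add hf.integrableOn hg.integrableOn,
    integral_add hf.integrableOn hg.integrableOn]
  ring

lemma pinv_const_mul (f : ℝ → ℝ) (c x : ℝ) :
    pinv (fun s => c * f s) x = c * pinv f x := by
  unfold pinv
  rw [MeasureTheory.integral_const_mul, MeasureTheory.integral_const_mul]
  ring

lemma integral_eq_zero_of_hasDerivAt {F w : ℝ → ℝ} (hw : Continuous w)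
    (hF : ∀ x, HasDerivAt F (w x) x) {R : ℝ} (hR : 0 ≤ R)
    (hw0 : ∀ x, x ∉ Set.Icc (-R) R → w x = 0) (hFR : F R = F (-R)) :
    ∫ x, w x = 0 := by
  have hRR : (-R : ℝ) ≤ R := by linarith
  have h1 : (∫ x, w x) = ∫ x in Set.Icc (-R) R, w x :=
    (setIntegral_eq_integral_of_forall_compl_eq_zero hw0).symm
  have h2 : (∫ x in Set.Icc (-R) R, w x) = ∫ x in (-R)..R, w x := by
    rw [MeasureTheory.integral_Icc_eq_integral_Ioc, intervalIntegral.integral_of_le hRR]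
  have h3 : (∫ x in (-R)..R, w x) = F R - F (-R) :=
    intervalIntegral.integral_eq_sub_of_hasDerivAt (fun x _ => hF x)
      (hw.intervalIntegrable _ _)
  rw [h1, h2, h3, hFR, sub_self]

lemma pinv_skew {f g : ℝ → ℝ} (hf : Continuous f) (hfc : HasCompactSupport f)
    (hg : Continuous g) (hgc : HasCompactSupport g) :
    ∫ x, f x * pinv g x = - ∫ x, pinv f x * g x := by
  have hfi : Integrable f := hf.integrable_of_hasCompactSupport hfc
  have hgi : Integrable g := hg.integrable_of_hasCompactSupport hgc
  obtain ⟨R₀, hR₀⟩ := ((hfc.union hgc).isBounded).subset_closedBall 0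
  set R₁ : ℝ := max R₀ 0 with hR1def
  set R : ℝ := R₁ + 1 with hRdef
  have hR : (0:ℝ) ≤ R := by positivity
  have key : ∀ x, x ∉ Set.Icc (-R₁) R₁ → f x = 0 ∧ g x = 0 := by
    intro x hx
    constructor <;> by_contra hne
    · have : x ∈ Metric.closedBall 0 R₀ :=
        hR₀ (Set.mem_union_left _ (subset_tsupport f (by simpa using hne)))
      simp only [Metric.mem_closedBall, Real.dist_eq, sub_zero] at this
      exact hx ⟨by cases' abs_le.1 this with h1 h2; simp only [hR1def]; nlinarith [le_max_left R₀ (0:ℝ)],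
        by cases' abs_le.1 this with h1 h2; exact h2.trans (le_max_left R₀ 0)⟩
    · have : x ∈ Metric.closedBall 0 R₀ :=
        hR₀ (Set.mem_union_right _ (subset_tsupport g (by simpa using hne)))
      simp only [Metric.mem_closedBall, Real.dist_eq, sub_zero] at this
      exact hx ⟨by cases' abs_le.1 this with h1 h2; simp only [hR1def]; nlinarith [le_max_left R₀ (0:ℝ)],
        by cases' abs_le.1 this with h1 h2; exact h2.trans (le_max_left R₀ 0)⟩
  have hfz : ∀ x, x ∉ Set.Icc (-R₁) R₁ → f x = 0 := fun x hx => (key x hx).1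
  have hgz : ∀ x, x ∉ Set.Icc (-R₁) R₁ → g x = 0 := fun x hx => (key x hx).2
  have hsub : ∀ x : ℝ, x ∉ Set.Icc (-R) R → x ∉ Set.Icc (-R₁) R₁ := by
    intro x hx hmem
    exact hx ⟨by linarith [hmem.1], by linarith [hmem.2]⟩
  have hwz : ∀ x, x ∉ Set.Icc (-R) R → f x * pinv g x + pinv f x * g x = 0 := by
    intro x hx; rw [hfz x (hsub x hx), hgz x (hsub x hx)]; ring
  have hFd : ∀ x, HasDerivAt (fun y => pinv f y * pinv g y)
      (f x * pinv g x + pinv f x * g x) x :=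
    fun x => (pinv_hasDerivAt hf hfi x).mul (pinv_hasDerivAt hg hgi x)
  have hwc : Continuous fun x => f x * pinv g x + pinv f x * g x :=
    (hf.mul (continuous_pinv hg hgi)).add ((continuous_pinv hf hfi).mul hg)
  have hFR : pinv f R * pinv g R = pinv f (-R) * pinv g (-R) := by
    rw [pinv_top hfi hfz (by linarith : R₁ ≤ R), pinv_top hgi hgz (by linarith : R₁ ≤ R),
      pinv_bot hfi hfz (by linarith : -R < -R₁), pinv_bot hgi hgz (by linarith : -R < -R₁)]
    ring
  have hzero : ∫ x, (f x * pinv g x + pinv f x * g x) = 0 :=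
    integral_eq_zero_of_hasDerivAt hwc hFd hR hwz hFR
  have hint1 : Integrable (fun x => f x * pinv g x) := by
    apply Continuous.integrable_of_hasCompactSupport (hf.mul (continuous_pinv hg hgi))
    exact hfc.mul_right
  have hint2 : Integrable (fun x => pinv f x * g x) := by
    apply Continuous.integrable_of_hasCompactSupport ((continuous_pinv hf hfi).mul hg)
    exact hgc.mul_left
  rw [integral_add hint1 hint2] at hzero
  linarith





/-- A support bound for a compactly supported function on `ℝ × ℝ`. -/
lemma exists_suppR {g : ℝ × ℝ → ℝ} (hgc : HasCompactSupport g) :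
    ∃ R : ℝ, 0 ≤ R ∧ ∀ p : ℝ × ℝ, (R < |p.1| ∨ R < |p.2|) → g p = 0 := by
  obtain ⟨R₀, hR₀⟩ := hgc.isBounded.subset_closedBall 0
  refine ⟨max R₀ 0, le_max_right _ _, fun p hp => ?_⟩
  by_contra hne
  have hmem : p ∈ Metric.closedBall 0 R₀ := hR₀ (subset_tsupport g (by simpa using hne))
  simp only [Metric.mem_closedBall, Real.dist_eq, dist_zero_right] at hmem
  have h1 : ‖p.1‖ ≤ R₀ := (norm_fst_le p).trans hmem
  have h2 : ‖p.2‖ ≤ R₀ := (norm_snd_le p).trans hmem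
  rw [Real.norm_eq_abs] at h1 h2
  rcases hp with hp | hp
  · exact absurd (h1.trans (le_max_left _ _)) (not_le.2 hp)
  · exact absurd (h2.trans (le_max_left _ _)) (not_le.2 hp)

/-- Slices of a continuous compactly supported function are cont. & compactly supported. -/
lemma slice_cont {g : ℝ × ℝ → ℝ} (hg : Continuous g) (y : ℝ) :
    Continuous (fun s => g (s, y)) :=
  hg.comp (continuous_id.prodMk continuous_const)

lemma sliceY_cont {g : ℝ × ℝ → ℝ} (hg : Continuous g) (x : ℝ) :
    Continuous (fun t => g (x, t)) :=
  hg.comp (continuous_const.prodMk continuous_id)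

lemma slice_compSupp {g : ℝ × ℝ → ℝ} {R : ℝ}
    (hR : ∀ p : ℝ × ℝ, (R < |p.1| ∨ R < |p.2|) → g p = 0) (y : ℝ) :
    HasCompactSupport (fun s => g (s, y)) := by
  apply HasCompactSupport.intro (isCompact_Icc (a := -R) (b := R))
  intro s hs
  have : R < |s| := by
    by_contra hc
    exact hs (abs_le.1 (not_lt.1 hc))
  exact hR (s, y) (Or.inl this)

lemma sliceY_compSupp {g : ℝ × ℝ → ℝ} {R : ℝ}
    (hR : ∀ p : ℝ × ℝ, (R < |p.1| ∨ R < |p.2|) → g p = 0) (x : ℝ) :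
    HasCompactSupport (fun t => g (x, t)) := by
  apply HasCompactSupport.intro (isCompact_Icc (a := -R) (b := R))
  intro t ht
  have : R < |t| := by
    by_contra hc
    exact ht (abs_le.1 (not_lt.1 hc))
  exact hR (x, t) (Or.inr this)

lemma abs_gt_of_le_neg {R s : ℝ} (h : s ≤ -(R+1)) : R < |s| :=
  lt_of_lt_of_le (by linarith) ((by linarith : R + 1 ≤ -s).trans (neg_le_abs s))

lemma abs_gt_of_ge {R s : ℝ} (h : R + 1 ≤ s) : R < |s| :=
  lt_of_lt_of_le (by linarith) (h.trans (le_abs_self s))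

lemma pinvX_eq_parametric {g : ℝ × ℝ → ℝ} (hg : Continuous g) {R : ℝ}
    (hRz : ∀ p : ℝ × ℝ, (R < |p.1| ∨ R < |p.2|) → g p = 0) (p : ℝ × ℝ) :
    pinvX g p = (∫ s in (-(R+1))..p.1, g (s, p.2))
      - (1/2) * ∫ s in (-(R+1))..(R+1), g (s, p.2) := by
  have hi : Integrable (fun s => g (s, p.2)) :=
    (slice_cont hg p.2).integrable_of_hasCompactSupport (slice_compSupp hRz p.2)
  show pinv (fun s => g (s, p.2)) p.1 = _
  rw [pinv_eq hi]
  have z : (∫ s in Set.Iic (-(R+1)), g (s, p.2)) = 0 :=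
    setIntegral_eq_zero_of_forall_eq_zero fun s hs =>
      hRz (s, p.2) (Or.inl (abs_gt_of_le_neg hs))
  have e1 : (∫ s in Set.Iic p.1, g (s, p.2)) = ∫ s in (-(R+1))..p.1, g (s, p.2) := by
    have := intervalIntegral.integral_Iic_sub_Iic (μ := volume) (f := fun s => g (s, p.2))
      (a := -(R+1)) (b := p.1) hi.integrableOn hi.integrableOn
    linarith
  have e2 : (∫ s, g (s, p.2)) = ∫ s in (-(R+1))..(R+1), g (s, p.2) := by
    have h4 : (∫ s in Set.Iic (R+1), g (s, p.2)) = ∫ s, g (s, p.2) :=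
      setIntegral_eq_integral_of_forall_compl_eq_zero fun s hs =>
        hRz (s, p.2) (Or.inl (abs_gt_of_ge (le_of_lt (by simpa using hs))))
    have := intervalIntegral.integral_Iic_sub_Iic (μ := volume) (f := fun s => g (s, p.2))
      (a := -(R+1)) (b := R+1) hi.integrableOn hi.integrableOn
    linarith
  rw [e1, e2]

lemma continuous_pinvX {g : ℝ × ℝ → ℝ} (hg : Continuous g) (hgc : HasCompactSupport g) :
    Continuous (pinvX g) := by
  obtain ⟨R, hR0, hRz⟩ := exists_suppR hgc
  have huc : Continuous (Function.uncurry fun (p : ℝ × ℝ) (t : ℝ) => g (t, p.2)) :=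
    hg.comp (continuous_snd.prodMk continuous_fst.snd)
  have c1 : Continuous fun p : ℝ × ℝ => ∫ s in (-(R+1))..p.1, g (s, p.2) :=
    intervalIntegral.continuous_parametric_intervalIntegral_of_continuous
      (μ := volume) huc continuous_fst
  have c2 : Continuous fun p : ℝ × ℝ => ∫ s in (-(R+1))..(R+1), g (s, p.2) :=
    intervalIntegral.continuous_parametric_intervalIntegral_of_continuous'
      (μ := volume) huc _ _
  have : Continuous fun p : ℝ × ℝ => (∫ s in (-(R+1))..p.1, g (s, p.2))
      - (1/2) * ∫ s in (-(R+1))..(R+1), g (s, p.2) := c1.sub (continuous_const.mul c2)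
  exact this.congr fun p => (pinvX_eq_parametric hg hRz p).symm

lemma hasDerivAt_sliceY {u : ℝ × ℝ → ℝ} (hu : ContDiff ℝ (⊤ : ℕ∞) u) (p : ℝ × ℝ) :
    HasDerivAt (fun t => u (p.1, t)) (dY u p) p.2 := by
  have hd : DifferentiableAt ℝ (fun t => u (p.1, t)) p.2 := by
    have : DifferentiableAt ℝ u (p.1, p.2) := (hu.differentiable (by simp)) _
    exact this.comp p.2 ((differentiableAt_const _).prodMk differentiableAt_id)
  exact hd.hasDerivAt

lemma dY_eq_fderiv {u : ℝ × ℝ → ℝ} (hu : ContDiff ℝ (⊤ : ℕ∞) u) (p : ℝ × ℝ) :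
    dY u p = fderiv ℝ u p (0, 1) := by
  have hl : HasDerivAt (fun t : ℝ => (p.1, t)) ((0 : ℝ), (1 : ℝ)) p.2 :=
    (hasDerivAt_const _ _).prodMk (hasDerivAt_id _)
  have hc : HasDerivAt (fun t => u (p.1, t)) (fderiv ℝ u (p.1, p.2) (0, 1)) p.2 :=
    (((hu.differentiable (by simp)) (p.1, p.2)).hasFDerivAt).comp_hasDerivAt p.2 hl
  have := hc.deriv
  simpa [dY] using this

lemma continuous_dY {u : ℝ × ℝ → ℝ} (hu : ContDiff ℝ (⊤ : ℕ∞) u) : Continuous (dY u) := by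
  have : Continuous fun p : ℝ × ℝ => fderiv ℝ u p (0, 1) :=
    (hu.continuous_fderiv (by simp)).clm_apply continuous_const
  exact this.congr fun p => (dY_eq_fderiv hu p).symm

lemma hasCompactSupport_dY {u : ℝ × ℝ → ℝ} (hu : ContDiff ℝ (⊤ : ℕ∞) u)
    (huc : HasCompactSupport u) : HasCompactSupport (dY u) := by
  have h1 : HasCompactSupport fun p : ℝ × ℝ => fderiv ℝ u p (0, 1) :=
    huc.fderiv_apply (𝕜 := ℝ) _
  have : (dY u) = fun p : ℝ × ℝ => fderiv ℝ u p (0, 1) := funext fun p => dY_eq_fderiv hu p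
  rw [this]; exact h1

lemma contDiff_dY {u : ℝ × ℝ → ℝ} (hu : ContDiff ℝ (⊤ : ℕ∞) u) : ContDiff ℝ (⊤ : ℕ∞) (dY u) := by
  have h1 : ContDiff ℝ (⊤ : ℕ∞) fun p : ℝ × ℝ => fderiv ℝ u p (0, 1) :=
    (hu.fderiv_right (by simp)).clm_apply contDiff_const
  have : (dY u) = fun p : ℝ × ℝ => fderiv ℝ u p (0, 1) := funext fun p => dY_eq_fderiv hu p
  rw [this]; exact h1

lemma dY_mul {a b : ℝ × ℝ → ℝ} (ha : ContDiff ℝ (⊤ : ℕ∞) a) (hb : ContDiff ℝ (⊤ : ℕ∞) b) (p : ℝ × ℝ) :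
    dY (fun q => a q * b q) p = dY a p * b p + a p * dY b p := by
  have := ((hasDerivAt_sliceY ha p).mul (hasDerivAt_sliceY hb p)).deriv
  exact this

lemma pinvX_hasDerivAt_y {G : ℝ × ℝ → ℝ} (hGs : ContDiff ℝ (⊤ : ℕ∞) G) (hGc : HasCompactSupport G)
    (x y : ℝ) :
    HasDerivAt (fun t => pinvX G (x, t)) (pinvX (dY G) (x, y)) y := by
  have hG : Continuous G := hGs.continuous
  have hdG : Continuous (dY G) := continuous_dY hGs
  have hdGc : HasCompactSupport (dY G) := hasCompactSupport_dY hGs hGc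
  obtain ⟨R, hR0, hRz⟩ := exists_suppR hGc
  obtain ⟨R', hR'0, hR'z⟩ := exists_suppR hdGc
  obtain ⟨C, hC⟩ : ∃ C : ℝ, ∀ p, ‖dY G p‖ ≤ C := by
    obtain ⟨C, hC⟩ := (hdG.norm).bddAbove_range_of_hasCompactSupport hdGc.norm
    exact ⟨C, fun p => hC (Set.mem_range_self p)⟩
  set bound : ℝ → ℝ := Set.indicator (Set.Icc (-R') R') (fun _ => C) with hbdef
  have hdiff : ∀ p : ℝ × ℝ, HasDerivAt (fun t => G (p.1, t)) (dY G p) p.2 :=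
    hasDerivAt_sliceY hGs
  have main : ∀ S : Set ℝ, HasDerivAt (fun t => ∫ s in S, G (s, t))
      (∫ s in S, dY G (s, y)) y := by
    intro S
    have h := hasDerivAt_integral_of_dominated_loc_of_deriv_le
      (μ := volume.restrict S) (F := fun t s => G (s, t)) (F' := fun t s => dY G (s, t))
      (x₀ := y) (bound := bound) (Metric.ball_mem_nhds y zero_lt_one)
      (Filter.Eventually.of_forall fun t => ((slice_cont hG t).aestronglyMeasurable).restrict)
      (((slice_cont hG y).integrable_of_hasCompactSupport (slice_compSupp hRz y)).restrict)
      (((slice_cont hdG y).aestronglyMeasurable).restrict)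
      (Filter.Eventually.of_forall fun s => ?_)
      ?_
      (Filter.Eventually.of_forall fun s => fun t _ => hdiff (s, t))
    · exact h.2
    · intro t _
      show ‖dY G (s, t)‖ ≤ bound s
      by_cases hs : s ∈ Set.Icc (-R') R'
      · rw [hbdef, Set.indicator_of_mem hs]
        exact hC (s, t)
      · rw [hbdef, Set.indicator_of_notMem hs]
        have : R' < |s| := by
          by_contra hc
          exact hs (abs_le.1 (not_lt.1 hc))
        rw [hR'z (s, t) (Or.inl this)]
        simp
    · refine Integrable.restrict ?_
      rw [hbdef, integrable_indicator_iff measurableSet_Icc]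
      exact integrableOn_const measure_Icc_lt_top.ne
  have h1 := main (Set.Iio x)
  have h2 := main (Set.Ioi x)
  exact ((h1.sub h2).const_mul (1/2 : ℝ))

lemma ibp_y {a b a' b' : ℝ → ℝ} (ha : ∀ t, HasDerivAt a (a' t) t)
    (hb : ∀ t, HasDerivAt b (b' t) t) (ha' : Continuous a') (hb' : Continuous b')
    {R : ℝ} (hR : 0 ≤ R) (h0 : ∀ t, t ∉ Set.Icc (-R) R → a t = 0 ∧ a' t = 0) :
    ∫ t, a t * b' t = - ∫ t, a' t * b t := by
  have hac : Continuous a := continuous_iff_continuousAt.2 fun t => (ha t).continuousAt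
  have hbc : Continuous b := continuous_iff_continuousAt.2 fun t => (hb t).continuousAt
  have hsub : ∀ t : ℝ, t ∉ Set.Icc (-(R+1)) (R+1) → t ∉ Set.Icc (-R) R := by
    intro t ht hm
    exact ht ⟨by linarith [hm.1], by linarith [hm.2]⟩
  have hwz : ∀ t, t ∉ Set.Icc (-(R+1)) (R+1) → a' t * b t + a t * b' t = 0 := by
    intro t ht; rw [(h0 t (hsub t ht)).1, (h0 t (hsub t ht)).2]; ring
  have hFd : ∀ t, HasDerivAt (fun s => a s * b s) (a' t * b t + a t * b' t) t :=
    fun t => (ha t).mul (hb t)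
  have hwc : Continuous fun t => a' t * b t + a t * b' t :=
    (ha'.mul hbc).add (hac.mul hb')
  have hFR : a (R+1) * b (R+1) = a (-(R+1)) * b (-(R+1)) := by
    rw [(h0 (R+1) (fun hm => absurd hm.2 (by push_neg; linarith))).1,
      (h0 (-(R+1)) (fun hm => absurd hm.1 (by push_neg; linarith))).1]
    ring
  have hzero := integral_eq_zero_of_hasDerivAt hwc hFd (by linarith : (0:ℝ) ≤ R+1) hwz hFR
  have hsupp1 : HasCompactSupport fun t => a' t * b t := by
    apply HasCompactSupport.intro (isCompact_Icc (a := -R) (b := R))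
    intro t ht; rw [(h0 t ht).2]; ring
  have hsupp2 : HasCompactSupport fun t => a t * b' t := by
    apply HasCompactSupport.intro (isCompact_Icc (a := -R) (b := R))
    intro t ht; rw [(h0 t ht).1]; ring
  have hint1 : Integrable fun t => a' t * b t :=
    (ha'.mul hbc).integrable_of_hasCompactSupport hsupp1
  have hint2 : Integrable fun t => a t * b' t :=
    (hac.mul hb').integrable_of_hasCompactSupport hsupp2
  rw [integral_add hint1 hint2] at hzero
  linarith

lemma integrable2D_mul_pinvX_left {f g : ℝ × ℝ → ℝ} (hf : Continuous f)
    (hfc : HasCompactSupport f) (hg : Continuous g) (hgc : HasCompactSupport g) :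
    Integrable (fun p : ℝ × ℝ => f p * pinvX g p) := by
  apply Continuous.integrable_of_hasCompactSupport (hf.mul (continuous_pinvX hg hgc))
  exact hfc.mul_right

lemma integrable2D_mul_pinvX_right {f g : ℝ × ℝ → ℝ} (hf : Continuous f)
    (hfc : HasCompactSupport f) (hg : Continuous g) (hgc : HasCompactSupport g) :
    Integrable (fun p : ℝ × ℝ => pinvX g p * f p) := by
  apply Continuous.integrable_of_hasCompactSupport ((continuous_pinvX hg hgc).mul hf)
  exact hfc.mul_left

lemma skew2D {f g : ℝ × ℝ → ℝ} (hf : Continuous f) (hfc : HasCompactSupport f)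
    (hg : Continuous g) (hgc : HasCompactSupport g) :
    ∫ p : ℝ × ℝ, f p * pinvX g p = - ∫ p : ℝ × ℝ, pinvX f p * g p := by
  obtain ⟨Rf, hRf0, hRfz⟩ := exists_suppR hfc
  obtain ⟨Rg, hRg0, hRgz⟩ := exists_suppR hgc
  have h1 : (∫ p : ℝ × ℝ, f p * pinvX g p)
      = ∫ y, ∫ x, f (x, y) * pinvX g (x, y) :=
    integral_prod_symm _ (integrable2D_mul_pinvX_left hf hfc hg hgc)
  have h2 : (∫ p : ℝ × ℝ, pinvX f p * g p)
      = ∫ y, ∫ x, pinvX f (x, y) * g (x, y) :=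
    integral_prod_symm _ (integrable2D_mul_pinvX_right hg hgc hf hfc)
  rw [h1, h2, ← MeasureTheory.integral_neg]
  apply MeasureTheory.integral_congr_ae (Filter.Eventually.of_forall fun y => ?_)
  have := pinv_skew (f := fun s => f (s, y)) (g := fun s => g (s, y))
    (slice_cont hf y) (slice_compSupp hRfz y) (slice_cont hg y) (slice_compSupp hRgz y)
  exact this

lemma ibp2D {G u w : ℝ × ℝ → ℝ} (hGs : ContDiff ℝ (⊤ : ℕ∞) G) (hGc : HasCompactSupport G)
    (hu : ContDiff ℝ (⊤ : ℕ∞) u) (huc : HasCompactSupport u)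
    (hw : ContDiff ℝ (⊤ : ℕ∞) w) (hwc : HasCompactSupport w) :
    ∫ p : ℝ × ℝ, (pinvX G p * u p) * dY w p
      = - ∫ p : ℝ × ℝ, (pinvX (dY G) p * u p + pinvX G p * dY u p) * w p := by
  have hG : Continuous G := hGs.continuous
  have hPG : Continuous (pinvX G) := continuous_pinvX hG hGc
  have hdG : Continuous (dY G) := continuous_dY hGs
  have hdGc : HasCompactSupport (dY G) := hasCompactSupport_dY hGs hGc
  have hPdG : Continuous (pinvX (dY G)) := continuous_pinvX hdG hdGc
  have hdu : Continuous (dY u) := continuous_dY hu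
  have hduc : HasCompactSupport (dY u) := hasCompactSupport_dY hu huc
  have hdw : Continuous (dY w) := continuous_dY hw
  have hdwc : HasCompactSupport (dY w) := hasCompactSupport_dY hw hwc
  obtain ⟨Ru, hRu0, hRuz⟩ := exists_suppR huc
  obtain ⟨Rd, hRd0, hRdz⟩ := exists_suppR hduc
  have hint1 : Integrable (fun p : ℝ × ℝ => (pinvX G p * u p) * dY w p) := by
    apply Continuous.integrable_of_hasCompactSupport ((hPG.mul hu.continuous).mul hdw)
    exact (huc.mul_left).mul_right
  have hint2 : Integrable
      (fun p : ℝ × ℝ => (pinvX (dY G) p * u p + pinvX G p * dY u p) * w p) := by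
    apply Continuous.integrable_of_hasCompactSupport
      (((hPdG.mul hu.continuous).add (hPG.mul hdu)).mul hw.continuous)
    exact hwc.mul_left
  have h1 : (∫ p : ℝ × ℝ, (pinvX G p * u p) * dY w p)
      = ∫ x, ∫ y, (pinvX G (x, y) * u (x, y)) * dY w (x, y) :=
    integral_prod _ hint1
  have h2 : (∫ p : ℝ × ℝ, (pinvX (dY G) p * u p + pinvX G p * dY u p) * w p)
      = ∫ x, ∫ y, (pinvX (dY G) (x, y) * u (x, y) + pinvX G (x, y) * dY u (x, y)) * w (x, y) :=
    integral_prod _ hint2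
  rw [h1, h2, ← MeasureTheory.integral_neg]
  apply MeasureTheory.integral_congr_ae (Filter.Eventually.of_forall fun x => ?_)
  set R : ℝ := max Ru Rd with hRdef
  have habs : ∀ t : ℝ, t ∉ Set.Icc (-R) R → (Ru < |t| ∧ Rd < |t|) := by
    intro t ht
    have : R < |t| := by
      by_contra hc
      exact ht (abs_le.1 (not_lt.1 hc))
    exact ⟨(le_max_left _ _).trans_lt this, (le_max_right _ _).trans_lt this⟩
  have := ibp_y (a := fun t => pinvX G (x, t) * u (x, t)) (b := fun t => w (x, t))
    (a' := fun t => pinvX (dY G) (x, t) * u (x, t) + pinvX G (x, t) * dY u (x, t))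
    (b' := fun t => dY w (x, t))
    (fun t => (pinvX_hasDerivAt_y hGs hGc x t).mul (hasDerivAt_sliceY hu (x, t)))
    (fun t => hasDerivAt_sliceY hw (x, t))
    (((sliceY_cont hPdG x).mul (sliceY_cont hu.continuous x)).add
      ((sliceY_cont hPG x).mul (sliceY_cont hdu x)))
    (sliceY_cont hdw x)
    (le_trans hRu0 (le_max_left _ _))
    (fun t ht =>
      ⟨(by rw [hRuz (x, t) (Or.inr (habs t ht).1)]; ring :
          pinvX G (x, t) * u (x, t) = 0),
        (by rw [hRuz (x, t) (Or.inr (habs t ht).1), hRdz (x, t) (Or.inr (habs t ht).2)]; ring :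
          pinvX (dY G) (x, t) * u (x, t) + pinvX G (x, t) * dY u (x, t) = 0)⟩)
  simpa using this

lemma cubicDeriv (C0 C1 C2 : ℝ) :
    HasDerivAt (fun ε : ℝ => 3*(C0 + ε*C1 + ε^2*C2)) (3*C1) 0 := by
  have ha : HasDerivAt (fun ε : ℝ => ε*C1) C1 0 := by
    simpa using (hasDerivAt_id (0:ℝ)).mul_const C1
  have hb : HasDerivAt (fun ε : ℝ => ε^2*C2) 0 0 := by
    simpa using (hasDerivAt_pow 2 (0:ℝ)).mul_const C2
  have h1 : HasDerivAt (fun ε : ℝ => C0 + ε*C1 + ε^2*C2) C1 0 := by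
    have := ((ha.const_add C0).add hb); rw [add_zero] at this; exact this
  simpa using h1.const_mul 3

/-- Variational derivative of `H₂` with respect to `u₂`:
`δH₂/δu₂ = v·u_{1,y} + v₁·u₁` with `v = 3∂_x^{-1}(u₁u₂)_y` and
`v₁ = 3∂_x^{-1}(u_{1,y}·u₂)_y`. -/
theorem H₂_variational_derivative_u₂ (u₁ u₂ h : ℝ × ℝ → ℝ)
    (hu₁ : ContDiff ℝ (⊤ : ℕ∞) u₁) (hu₁c : HasCompactSupport u₁)
    (hu₂ : ContDiff ℝ (⊤ : ℕ∞) u₂) (hu₂c : HasCompactSupport u₂)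
    (hh : ContDiff ℝ (⊤ : ℕ∞) h) (hhc : HasCompactSupport h)
    (v v₁ : ℝ × ℝ → ℝ)
    (hv : ∀ p : ℝ × ℝ, v p = 3 * pinvX (dY (fun q => u₁ q * u₂ q)) p)
    (hv₁ : ∀ p : ℝ × ℝ, v₁ p = 3 * pinvX (dY (fun q => dY u₁ q * u₂ q)) p) :
    HasDerivAt (fun ε : ℝ => H₂ u₁ (fun p => u₂ p + ε * h p))
      (∫ p : ℝ × ℝ, (v p * dY u₁ p + v₁ p * u₁ p) * h p) 0 := by

  -- basic facts
  have hAs : ContDiff ℝ (⊤ : ℕ∞) (dY u₁) := contDiff_dY hu₁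
  have hA : Continuous (dY u₁) := hAs.continuous
  have hAc : HasCompactSupport (dY u₁) := hasCompactSupport_dY hu₁ hu₁c
  have hB : Continuous (dY u₂) := continuous_dY hu₂
  have hHy : Continuous (dY h) := continuous_dY hh
  have hg₀ : Continuous (fun q : ℝ × ℝ => u₁ q * dY u₂ q) := hu₁.continuous.mul hB
  have hg₀c : HasCompactSupport (fun q : ℝ × ℝ => u₁ q * dY u₂ q) := hu₁c.mul_right
  have hg₁ : Continuous (fun q : ℝ × ℝ => u₁ q * dY h q) := hu₁.continuous.mul hHy
  have hg₁c : HasCompactSupport (fun q : ℝ × ℝ => u₁ q * dY h q) := hu₁c.mul_right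
  have hg₂s : ContDiff ℝ (⊤ : ℕ∞) (fun q : ℝ × ℝ => dY u₁ q * u₂ q) := hAs.mul hu₂
  have hg₂ : Continuous (fun q : ℝ × ℝ => dY u₁ q * u₂ q) := hg₂s.continuous
  have hg₂c : HasCompactSupport (fun q : ℝ × ℝ => dY u₁ q * u₂ q) := hAc.mul_right
  have hdg₂ : Continuous (dY (fun q : ℝ × ℝ => dY u₁ q * u₂ q)) := continuous_dY hg₂s
  have hdg₂c : HasCompactSupport (dY (fun q : ℝ × ℝ => dY u₁ q * u₂ q)) :=
    hasCompactSupport_dY hg₂s hg₂c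
  have hP₀ : Continuous (pinvX (fun q : ℝ × ℝ => u₁ q * dY u₂ q)) := continuous_pinvX hg₀ hg₀c
  have hP₁ : Continuous (pinvX (fun q : ℝ × ℝ => u₁ q * dY h q)) := continuous_pinvX hg₁ hg₁c
  have hQ : Continuous (pinvX (fun q : ℝ × ℝ => dY u₁ q * u₂ q)) := continuous_pinvX hg₂ hg₂c
  have hDQ : Continuous (pinvX (dY (fun q : ℝ × ℝ => dY u₁ q * u₂ q))) :=
    continuous_pinvX hdg₂ hdg₂c
  obtain ⟨R₀, hR₀0, hR₀z⟩ := exists_suppR hg₀c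
  obtain ⟨R₁, hR₁0, hR₁z⟩ := exists_suppR hg₁c
  obtain ⟨R₂, hR₂0, hR₂z⟩ := exists_suppR hg₂c
  -- integrability of all the 2D integrands
  have hi1 : Integrable (fun p : ℝ × ℝ =>
      dY u₁ p * u₂ p * pinvX (fun q : ℝ × ℝ => u₁ q * dY u₂ q) p) :=
    Continuous.integrable_of_hasCompactSupport ((hA.mul hu₂.continuous).mul hP₀)
      ((hAc.mul_right).mul_right)
  have hi2 : Integrable (fun p : ℝ × ℝ =>
      dY u₁ p * h p * pinvX (fun q : ℝ × ℝ => u₁ q * dY u₂ q) p) :=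
    Continuous.integrable_of_hasCompactSupport ((hA.mul hh.continuous).mul hP₀)
      ((hAc.mul_right).mul_right)
  have hi3 : Integrable (fun p : ℝ × ℝ =>
      dY u₁ p * u₂ p * pinvX (fun q : ℝ × ℝ => u₁ q * dY h q) p) :=
    Continuous.integrable_of_hasCompactSupport ((hA.mul hu₂.continuous).mul hP₁)
      ((hAc.mul_right).mul_right)
  have hi4 : Integrable (fun p : ℝ × ℝ =>
      dY u₁ p * h p * pinvX (fun q : ℝ × ℝ => u₁ q * dY h q) p) :=
    Continuous.integrable_of_hasCompactSupport ((hA.mul hh.continuous).mul hP₁)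
      ((hAc.mul_right).mul_right)
  have hi5 : Integrable (fun p : ℝ × ℝ =>
      (pinvX (dY (fun q : ℝ × ℝ => dY u₁ q * u₂ q)) p * u₁ p) * h p) :=
    Continuous.integrable_of_hasCompactSupport ((hDQ.mul hu₁.continuous).mul hh.continuous)
      (hhc.mul_left)
  have hi6 : Integrable (fun p : ℝ × ℝ =>
      (pinvX (fun q : ℝ × ℝ => dY u₁ q * u₂ q) p * dY u₁ p) * h p) :=
    Continuous.integrable_of_hasCompactSupport ((hQ.mul hA).mul hh.continuous)
      (hhc.mul_left)
  -- pointwise split of the pinvX term in ε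
  have hsplit : ∀ (ε : ℝ) (p : ℝ × ℝ),
      pinvX (fun q => u₁ q * dY (fun p' => u₂ p' + ε * h p') q) p
        = pinvX (fun q : ℝ × ℝ => u₁ q * dY u₂ q) p
          + ε * pinvX (fun q : ℝ × ℝ => u₁ q * dY h q) p := by
    intro ε p
    have hder : ∀ q : ℝ × ℝ, dY (fun p' => u₂ p' + ε * h p') q = dY u₂ q + ε * dY h q := by
      intro q
      have := ((hasDerivAt_sliceY hu₂ q).add ((hasDerivAt_sliceY hh q).const_mul ε)).deriv
      exact this
    have e : (fun s => u₁ (s, p.2) * dY (fun p' => u₂ p' + ε * h p') (s, p.2))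
        = fun s => (u₁ (s, p.2) * dY u₂ (s, p.2)) + ε * (u₁ (s, p.2) * dY h (s, p.2)) := by
      funext s; rw [hder (s, p.2)]; ring
    have hsl0 : Integrable (fun s => u₁ (s, p.2) * dY u₂ (s, p.2)) :=
      (slice_cont hg₀ p.2).integrable_of_hasCompactSupport (slice_compSupp hR₀z p.2)
    have hsl1 : Integrable (fun s => u₁ (s, p.2) * dY h (s, p.2)) :=
      (slice_cont hg₁ p.2).integrable_of_hasCompactSupport (slice_compSupp hR₁z p.2)
    show pinv _ p.1 = _
    rw [e, pinv_add hsl0 (hsl1.const_mul ε), pinv_const_mul]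
    rfl
  -- the map ε ↦ H₂ is a cubic polynomial in ε
  have hfun : ∀ ε : ℝ, H₂ u₁ (fun p => u₂ p + ε * h p)
      = 3*((∫ p : ℝ × ℝ, dY u₁ p * u₂ p * pinvX (fun q : ℝ × ℝ => u₁ q * dY u₂ q) p)
        + ε * (∫ p : ℝ × ℝ, (dY u₁ p * h p * pinvX (fun q : ℝ × ℝ => u₁ q * dY u₂ q) p
            + dY u₁ p * u₂ p * pinvX (fun q : ℝ × ℝ => u₁ q * dY h q) p))
        + ε^2 * (∫ p : ℝ × ℝ, dY u₁ p * h p * pinvX (fun q : ℝ × ℝ => u₁ q * dY h q) p)) := by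
    intro ε
    have e : (fun p : ℝ × ℝ => dY u₁ p * (u₂ p + ε * h p)
          * pinvX (fun q => u₁ q * dY (fun p' => u₂ p' + ε * h p') q) p)
        = fun p : ℝ × ℝ => (dY u₁ p * u₂ p * pinvX (fun q : ℝ × ℝ => u₁ q * dY u₂ q) p)
            + (ε * (dY u₁ p * h p * pinvX (fun q : ℝ × ℝ => u₁ q * dY u₂ q) p
                + dY u₁ p * u₂ p * pinvX (fun q : ℝ × ℝ => u₁ q * dY h q) p)
              + ε^2 * (dY u₁ p * h p * pinvX (fun q : ℝ × ℝ => u₁ q * dY h q) p)) := by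
      funext p; rw [hsplit ε p]; ring
    have hiT2 : Integrable (fun p : ℝ × ℝ =>
        ε * (dY u₁ p * h p * pinvX (fun q : ℝ × ℝ => u₁ q * dY u₂ q) p
          + dY u₁ p * u₂ p * pinvX (fun q : ℝ × ℝ => u₁ q * dY h q) p)) :=
      (hi2.add hi3).const_mul ε
    have hiT3 : Integrable (fun p : ℝ × ℝ =>
        ε^2 * (dY u₁ p * h p * pinvX (fun q : ℝ × ℝ => u₁ q * dY h q) p)) :=
      hi4.const_mul _
    have hiT23 : Integrable (fun p : ℝ × ℝ =>
        ε * (dY u₁ p * h p * pinvX (fun q : ℝ × ℝ => u₁ q * dY u₂ q) p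
          + dY u₁ p * u₂ p * pinvX (fun q : ℝ × ℝ => u₁ q * dY h q) p)
        + ε^2 * (dY u₁ p * h p * pinvX (fun q : ℝ × ℝ => u₁ q * dY h q) p)) :=
      hiT2.add hiT3
    show (3 : ℝ) * (∫ p : ℝ × ℝ, dY u₁ p * (u₂ p + ε * h p)
        * pinvX (fun q => u₁ q * dY (fun p' => u₂ p' + ε * h p') q) p) = _
    rw [e, integral_add hi1 hiT23, integral_add hiT2 hiT3,
      MeasureTheory.integral_const_mul, MeasureTheory.integral_const_mul]
    ring
  -- the value of the derivative
  have hskew : (∫ p : ℝ × ℝ, dY u₁ p * u₂ p * pinvX (fun q : ℝ × ℝ => u₁ q * dY h q) p)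
      = - ∫ p : ℝ × ℝ, pinvX (fun q : ℝ × ℝ => dY u₁ q * u₂ q) p * (u₁ p * dY h p) := by
    simpa using skew2D (f := fun p : ℝ × ℝ => dY u₁ p * u₂ p)
      (g := fun q : ℝ × ℝ => u₁ q * dY h q) (hA.mul hu₂.continuous) (hAc.mul_right) hg₁ hg₁c
  have hibp : (∫ p : ℝ × ℝ, (pinvX (fun q : ℝ × ℝ => dY u₁ q * u₂ q) p * u₁ p) * dY h p)
      = - ∫ p : ℝ × ℝ, (pinvX (dY (fun q : ℝ × ℝ => dY u₁ q * u₂ q)) p * u₁ p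
          + pinvX (fun q : ℝ × ℝ => dY u₁ q * u₂ q) p * dY u₁ p) * h p :=
    ibp2D hg₂s hg₂c hu₁ hu₁c hh hhc
  have hrear : (∫ p : ℝ × ℝ, pinvX (fun q : ℝ × ℝ => dY u₁ q * u₂ q) p * (u₁ p * dY h p))
      = ∫ p : ℝ × ℝ, (pinvX (fun q : ℝ × ℝ => dY u₁ q * u₂ q) p * u₁ p) * dY h p := by
    congr 1; funext p; ring
  have hsplit2 : (∫ p : ℝ × ℝ, (pinvX (dY (fun q : ℝ × ℝ => dY u₁ q * u₂ q)) p * u₁ p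
        + pinvX (fun q : ℝ × ℝ => dY u₁ q * u₂ q) p * dY u₁ p) * h p)
      = (∫ p : ℝ × ℝ, (pinvX (dY (fun q : ℝ × ℝ => dY u₁ q * u₂ q)) p * u₁ p) * h p)
        + ∫ p : ℝ × ℝ, (pinvX (fun q : ℝ × ℝ => dY u₁ q * u₂ q) p * dY u₁ p) * h p := by
    rw [← integral_add hi5 hi6]
    congr 1; funext p; ring
  -- pointwise identity for v
  have hvsum : ∀ p : ℝ × ℝ, pinvX (dY (fun q => u₁ q * u₂ q)) p
      = pinvX (fun q : ℝ × ℝ => dY u₁ q * u₂ q) p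
        + pinvX (fun q : ℝ × ℝ => u₁ q * dY u₂ q) p := by
    intro p
    have em : (fun s => dY (fun q => u₁ q * u₂ q) (s, p.2))
        = fun s => (dY u₁ (s, p.2) * u₂ (s, p.2)) + (u₁ (s, p.2) * dY u₂ (s, p.2)) :=
      funext fun s => dY_mul hu₁ hu₂ (s, p.2)
    have hsl2 : Integrable (fun s => dY u₁ (s, p.2) * u₂ (s, p.2)) :=
      (slice_cont hg₂ p.2).integrable_of_hasCompactSupport (slice_compSupp hR₂z p.2)
    have hsl0 : Integrable (fun s => u₁ (s, p.2) * dY u₂ (s, p.2)) :=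
      (slice_cont hg₀ p.2).integrable_of_hasCompactSupport (slice_compSupp hR₀z p.2)
    show pinv _ p.1 = _
    rw [em, pinv_add hsl2 hsl0]
    rfl
  -- assemble the value equality
  have hval : (∫ p : ℝ × ℝ, (v p * dY u₁ p + v₁ p * u₁ p) * h p)
      = 3 * (∫ p : ℝ × ℝ, (dY u₁ p * h p * pinvX (fun q : ℝ × ℝ => u₁ q * dY u₂ q) p
          + dY u₁ p * u₂ p * pinvX (fun q : ℝ × ℝ => u₁ q * dY h q) p)) := by
    have eL : (fun p : ℝ × ℝ => (v p * dY u₁ p + v₁ p * u₁ p) * h p)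
        = fun p : ℝ × ℝ => 3 * ((dY u₁ p * h p * pinvX (fun q : ℝ × ℝ => u₁ q * dY u₂ q) p)
            + ((pinvX (fun q : ℝ × ℝ => dY u₁ q * u₂ q) p * dY u₁ p) * h p
              + (pinvX (dY (fun q : ℝ × ℝ => dY u₁ q * u₂ q)) p * u₁ p) * h p)) := by
      funext p
      rw [hv p, hv₁ p, hvsum p]
      ring
    have hi65 : Integrable (fun p : ℝ × ℝ =>
        (pinvX (fun q : ℝ × ℝ => dY u₁ q * u₂ q) p * dY u₁ p) * h p
        + (pinvX (dY (fun q : ℝ × ℝ => dY u₁ q * u₂ q)) p * u₁ p) * h p) :=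
      hi6.add hi5
    rw [eL, MeasureTheory.integral_const_mul,
      integral_add hi2 hi65, integral_add hi6 hi5,
      integral_add hi2 hi3, hskew, hrear, hibp, hsplit2]
    ring
  rw [hval]
  exact (cubicDeriv _ _ _).congr_of_eventuallyEq
    (Filter.Eventually.of_forall fun ε => hfun ε)
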